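/- (Stenger's lemma.) Let S̃ be a selfadjoint operator in a complex Hilbert space H and let H₀ be a closed subspace of H whose orthogonal complement is finite-dimensional. Then the compression of S̃ to H₀, i.e. the operator in H₀ with domain dom S̃ ∩ H₀ acting as x ↦ P_{H₀}(S̃x), is a selfadjoint operator in the Hilbert space H₀. -/

import Mathlib

/-!
Since `H₀ᗮ` is finite-dimensional and `dom S̃` is dense, the orthogonal projection onto `H₀ᗮ` maps
`dom S̃` onto `H₀ᗮ` and so has a bounded right inverse `σ : H₀ᗮ → dom S̃`. The bounded map
`x ↦ x - σ (P_{H₀ᗮ} x)` takes values in `H₀`, fixes `H₀` and sends `dom S̃` into `dom S̃ ∩ H₀`,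
so the compression is densely defined. For `v` in the domain of the adjoint of the compression,
the functional `x ↦ ⟪v, S̃ x⟫` on `dom S̃` is then bounded: it is bounded on `dom S̃ ∩ H₀`, and the
remainder factors through the finite-dimensional `H₀ᗮ`. Hence the adjoint of the compression is
the compression of the adjoint.
-/

set_option synthInstance.maxHeartbeats 1000000

open scoped ComplexInnerProductSpace

variable {H : Type*} [NormedAddCommGroup H] [InnerProductSpace ℂ H] [CompleteSpace H]

/-- The compression of an operator `T` in `H` to a closed subspace `K`: the operator in the
Hilbert space `K` with domain `dom T ∩ K` acting as `x ↦ P_K (T x)`. -/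
noncomputable def compression (K : Submodule ℂ H) [CompleteSpace K] (T : H →ₗ.[ℂ] H) :
    (↥K) →ₗ.[ℂ] (↥K) where
  domain := T.domain.comap K.subtype
  toFun := (K.orthogonalProjection).toLinearMap ∘ₗ T.toFun ∘ₗ
    ((K.subtype.domRestrict (T.domain.comap K.subtype)).codRestrict T.domain fun x => x.2)

theorem Submodule.eq_top_of_dense_of_finiteDimensional {𝕜 F : Type*} [NontriviallyNormedField 𝕜]
    [CompleteSpace 𝕜] [NormedAddCommGroup F] [NormedSpace 𝕜 F] [FiniteDimensional 𝕜 F]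
    (s : Submodule 𝕜 F) (hs : Dense (s : Set F)) : s = ⊤ :=
  SetLike.coe_injective <| by rw [← s.closed_of_finiteDimensional.closure_eq, hs.closure_eq]; rfl

namespace Submodule

variable {𝕜 E : Type*} [RCLike 𝕜] [NormedAddCommGroup E] [InnerProductSpace 𝕜 E]
  {K : Submodule 𝕜 E}

theorem exists_rightInverse_orthogonalProjectionOnto_comp_subtypeL [K.HasOrthogonalProjection]
    [FiniteDimensional 𝕜 K] {D : Submodule 𝕜 E} (hD : Dense (D : Set E)) :
    ∃ σ : K →L[𝕜] D, ∀ y, K.orthogonalProjectionOnto (σ y : E) = y := by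
  let f : D →L[𝕜] K := K.orthogonalProjectionOnto ∘L D.subtypeL
  have hsurj : Function.Surjective K.orthogonalProjectionOnto := fun y =>
    ⟨y, orthogonalProjectionOnto_mem_subspace_eq_self y⟩
  have hf : f.range = ⊤ := eq_top_of_dense_of_finiteDimensional _ <| by
    rw [LinearMap.coe_range]
    exact hsurj.denseRange.comp hD.denseRange_val K.orthogonalProjectionOnto.continuous
  obtain ⟨σ, hσ⟩ := f.exists_rightInverse_of_surjective hf
  exact ⟨σ, fun y => congr($hσ y)⟩

theorem sub_mem_of_orthogonalProjectionOnto_orthogonal_eq [K.HasOrthogonalProjection] {x y : E}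
    (h : Kᗮ.orthogonalProjectionOnto x = Kᗮ.orthogonalProjectionOnto y) : x - y ∈ K := by
  rw [← K.orthogonal_orthogonal, ← orthogonalProjectionOnto_eq_zero_iff, map_sub, h, sub_self]

end Submodule

open LinearPMap Submodule

section Compression

variable {E : Type*} [NormedAddCommGroup E] [InnerProductSpace ℂ E]
  {K : Submodule ℂ E} [CompleteSpace K] {T : E →ₗ.[ℂ] E}

theorem compression_apply (x : (compression K T).domain) :
    compression K T x = K.orthogonalProjectionOnto (T ⟨x, x.2⟩) := rfl

theorem LinearPMap.IsFormalAdjoint.compression {S : E →ₗ.[ℂ] E} (h : T.IsFormalAdjoint S)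
    (K : Submodule ℂ E) [CompleteSpace K] :
    (compression K T).IsFormalAdjoint (compression K S) := fun x y => by
  simpa only [compression_apply, inner_orthogonalProjectionOnto_eq_of_mem_right,
    inner_orthogonalProjectionOnto_eq_of_mem_left] using h ⟨x, x.2⟩ ⟨y, y.2⟩

variable [FiniteDimensional ℂ Kᗮ]

theorem dense_compression_domain (hT : Dense (T.domain : Set E)) :
    Dense ((compression K T).domain : Set K) := by
  obtain ⟨σ, hσ⟩ := Kᗮ.exists_rightInverse_orthogonalProjectionOnto_comp_subtypeL hT
  let φ : E → K := fun x => ⟨x - σ (Kᗮ.orthogonalProjectionOnto x),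
    sub_mem_of_orthogonalProjectionOnto_orthogonal_eq (hσ _).symm⟩
  have hφ : Continuous φ := by fun_prop
  have hφK : ∀ v : K, φ v = v := fun v => Subtype.ext <| by
    simp [φ, orthogonalProjectionOnto_apply_of_mem_orthogonal (K.le_orthogonal_orthogonal v.2)]
  have hφD : φ '' T.domain ⊆ (compression K T).domain := by
    rintro - ⟨x, hx, rfl⟩
    exact T.domain.sub_mem hx (σ _).2
  intro v
  rw [← hφK v]
  exact closure_mono hφD (mem_closure_image hφ.continuousAt (hT v))

variable [CompleteSpace E]

theorem compression_adjoint_domain_le (hT : Dense (T.domain : Set E)) :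
    (compression K T)†.domain ≤ (compression K T†).domain := by
  intro v hv
  have hS : Dense ((compression K T).domain : Set K) := dense_compression_domain hT
  obtain ⟨σ, hσ⟩ := Kᗮ.exists_rightInverse_orthogonalProjectionOnto_comp_subtypeL hT
  let P := Kᗮ.orthogonalProjectionOnto
  let w := (compression K T)† ⟨v, hv⟩
  let g : Kᗮ →ₗ[ℂ] ℂ := innerₛₗ ℂ (v : E) ∘ₗ T.toFun ∘ₗ σ.toLinearMap
  have hdecomp : ∀ x : T.domain, ⟪(v : E), T x⟫ = ⟪(w : E), x - σ (P x)⟫ + g (P x) := by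
    intro x
    have hx₀ : (x : E) - σ (P x) ∈ T.domain := T.domain.sub_mem x.2 (σ _).2
    have hx : T x = T ⟨_, hx₀⟩ + T (σ (P x)) := by
      rw [← LinearPMap.map_add]
      congr 1
      exact Subtype.ext (sub_add_cancel _ _).symm
    have hx₀K := sub_mem_of_orthogonalProjectionOnto_orthogonal_eq (hσ (P x)).symm
    have hadj := adjoint_isFormalAdjoint hS (⟨v, hv⟩ : (compression K T)†.domain)
      (⟨⟨_, hx₀K⟩, hx₀⟩ : (compression K T).domain)
    rw [compression_apply, inner_orthogonalProjectionOnto_eq_of_mem_left] at hadj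
    rw [hx, inner_add_right, ← hadj]
    rfl
  show (v : E) ∈ T†.domain
  rw [mem_adjoint_domain_iff, show ⇑(innerₛₗ ℂ (v : E) ∘ₗ T.toFun) = _ from funext hdecomp]
  have hg := g.continuous_of_finiteDimensional
  fun_prop

theorem adjoint_compression (hT : Dense (T.domain : Set E)) :
    (compression K T)† = compression K T† := by
  have hle : compression K T† ≤ (compression K T)† :=
    ((adjoint_isFormalAdjoint hT).symm.compression K).le_adjoint (dense_compression_domain hT)
  exact (eq_of_le_of_domain_eq hle (le_antisymm hle.1 (compression_adjoint_domain_le hT))).symm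

end Compression

/-- **Stenger's lemma.** If `S̃` is a selfadjoint operator in a complex Hilbert
space `H` and `H₀` is a closed subspace of `H` with finite-dimensional orthogonal complement,
then the compression of `S̃` to `H₀` is a selfadjoint operator in the Hilbert space `H₀`. -/
theorem stenger_isSelfAdjoint_compression
    (St : H →ₗ.[ℂ] H) (hsa : IsSelfAdjoint St)
    (H₀ : Submodule ℂ H) [CompleteSpace H₀]
    (hfin : FiniteDimensional ℂ ↥H₀ᗮ) :
    IsSelfAdjoint (compression H₀ St) :=
  (adjoint_compression hsa.dense_domain).trans (congrArg (compression H₀) hsa)
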